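/- Let G be a countable amenable group and (X,T) a G-TDS in the CPE class α for some ordinal α (i.e., E_α(X,T) = X²). Then (X,T) has topological completely positive entropy; conversely, if (X,T) has topological CPE then it is in the CPE class α for some countable ordinal α. -/

import Mathlib

open Filter Pointwise MeasureTheory ENNReal

/-- `F` is a (left) Følner sequence: each `F n` is nonempty and for every nonempty finite `K ⊆ G`,
`|K·F_n △ F_n| / |F_n| → 0`. -/
def IsFolner {G : Type*} [Group G] (F : ℕ → Finset G) : Prop :=
  (∀ n, (F n).Nonempty) ∧
    ∀ K : Finset G, K.Nonempty → Tendsto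
      (fun n => ((symmDiff ((K : Set G) * (F n : Set G)) (F n : Set G)).ncard : ℝ) /
        ((F n).card : ℝ)) atTop (nhds 0)

/-- `N(𝒰)`: the minimum cardinality of a finite subcover of the cover `𝒰`. -/
noncomputable def coverN {X : Type*} (U : Set (Set X)) : ℕ :=
  sInf {n | ∃ V : Finset (Set X), ↑V ⊆ U ∧ V.card = n ∧ ⋃₀ (V : Set (Set X)) = Set.univ}

/-- The refinement `𝒰^F = ⋁_{g ∈ F} T^{g⁻¹} 𝒰` of a cover by a finite subset of the group. -/
def refineCover {G X : Type*} [Group G] [MulAction G X] (F : Finset G) (U : Set (Set X)) :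
    Set (Set X) :=
  {s | ∃ f : G → Set X, (∀ g ∈ F, f g ∈ U) ∧ s = ⋂ g ∈ F, (fun x : X => g • x) ⁻¹' f g}

/-- The topological entropy of the action with respect to the cover `𝒰`, computed along the
Følner sequence `F` (the limit exists and is independent of the Følner sequence; we use
`limsup` to express it). -/
noncomputable def coverEntropy {G X : Type*} [Group G] [MulAction G X]
    (F : ℕ → Finset G) (U : Set (Set X)) : ℝ :=
  Filter.limsup
    (fun n => Real.log (coverN (refineCover (F n) U)) / ((F n).card : ℝ)) Filter.atTop

/-- `(x,y)` is an entropy pair: `x ≠ y` and every pair of disjoint closed neighborhoods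
`U, V` of `x` and `y` satisfies `h_top(T, {Uᶜ, Vᶜ}) > 0`. -/
def IsEntropyPair {G X : Type*} [Group G] [TopologicalSpace X] [MulAction G X]
    (F : ℕ → Finset G) (x y : X) : Prop :=
  x ≠ y ∧ ∀ U V : Set X, IsClosed U → IsClosed V → U ∈ nhds x → V ∈ nhds y →
    Disjoint U V → 0 < coverEntropy F ({Uᶜ, Vᶜ} : Set (Set X))

/-- The pseudo-orbit tracing property: for every `ε > 0` there are `δ > 0` and a finite
`S ⊆ G` such that every `(S,δ)`-pseudo-orbit is `ε`-traced by some point. -/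
def HasPOTP (G X : Type*) [Group G] [MetricSpace X] [MulAction G X] : Prop :=
  ∀ ε : ℝ, 0 < ε → ∃ δ : ℝ, 0 < δ ∧ ∃ S : Finset G, ∀ o : G → X,
    (∀ s ∈ S, ∀ g : G, dist (s • o g) (o (s * g)) < δ) →
    ∃ z : X, ∀ g : G, dist (g • z) (o g) ≤ ε

/-- `(x,y)` is an `ε`-asymptotic pair. -/
def IsEpsAsymptoticPair {G X : Type*} [Group G] [MetricSpace X] [MulAction G X]
    (ε : ℝ) (x y : X) : Prop :=
  {g : G | ε < dist (g • x) (g • y)}.Finite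

/-- `(x,y)` is an asymptotic pair. -/
def IsAsymptoticPair {G X : Type*} [Group G] [MetricSpace X] [MulAction G X]
    (x y : X) : Prop :=
  ∀ ε : ℝ, 0 < ε → IsEpsAsymptoticPair (G := G) ε x y

open scoped Classical

/-- One step of the hierarchy: take the generated equivalence relation if the set is
closed, and the topological closure otherwise. -/
noncomputable def relStep {X : Type*} [TopologicalSpace X] (R : Set (X × X)) : Set (X × X) :=
  if IsClosed R then {p | Relation.EqvGen (fun a b => (a, b) ∈ R) p.1 p.2} else closure R

/-- The transfinite hierarchy generated by a relation `R0` (placed at index `0`):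
alternately take closures and generated equivalence relations, with unions at limits.
With base `E(X,T) ∪ Δ` this gives `relHier _ β = E_{1+β}`; with base `A(X,T)` it gives
`relHier _ α = A_α`. -/
noncomputable def relHier {X : Type*} [TopologicalSpace X] (R0 : Set (X × X)) :
    Ordinal → Set (X × X) :=
  fun α => Ordinal.limitRecOn α R0 (fun _ ih => relStep ih)
    (fun α _ ih => ⋃ β : {β : Ordinal // β < α}, ih β.1 β.2)

/-- `(X,T)` is in the CPE class `α` (for the hierarchy computed along `F`):
`E_α(X,T) = X²` and `E_β(X,T) ≠ X²` for all `0 < β < α`.  Here the paper's `E_γ`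
(defined for `γ ≥ 1`, with `E_1 = E(X,T) ∪ Δ`) equals `relHier (E ∪ Δ) (γ - 1)`. -/
noncomputable def InCPEClass {G X : Type*} [Group G] [TopologicalSpace X] [MulAction G X]
    (F : ℕ → Finset G) (α : Ordinal) : Prop :=
  0 < α ∧
    relHier ({p : X × X | IsEntropyPair F p.1 p.2} ∪ {p : X × X | p.1 = p.2}) (α - 1) =
      Set.univ ∧
    ∀ β : Ordinal, 0 < β → β < α →
      relHier ({p : X × X | IsEntropyPair F p.1 p.2} ∪ {p : X × X | p.1 = p.2}) (β - 1) ≠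
        Set.univ

/-- Topological completely positive entropy, via the Blanchard/Kerr–Li characterization:
the smallest closed equivalence relation containing the entropy pairs is `X²`, i.e. every
closed equivalence relation containing the entropy pairs is all of `X²`. -/
def TopCPE {G X : Type*} [Group G] [TopologicalSpace X] [MulAction G X]
    (F : ℕ → Finset G) : Prop :=
  ∀ R : Set (X × X), IsClosed R → (∀ a : X, (a, a) ∈ R) →
    (∀ a b : X, (a, b) ∈ R → (b, a) ∈ R) →
    (∀ a b c : X, (a, b) ∈ R → (b, c) ∈ R → (a, c) ∈ R) →
    {p : X × X | IsEntropyPair F p.1 p.2} ⊆ R → R = Set.univ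


section AuxHier
variable {X : Type*} [TopologicalSpace X] (R0 : Set (X × X))

lemma relHier_zero : relHier R0 0 = R0 := Ordinal.limitRecOn_zero ..

lemma relHier_succ (α : Ordinal) :
    relHier R0 (Order.succ α) = relStep (relHier R0 α) := Ordinal.limitRecOn_succ ..

lemma relHier_limit {α : Ordinal} (h : Order.IsSuccLimit α) :
    relHier R0 α = ⋃ β : {β : Ordinal // β < α}, relHier R0 β.1 :=
  Ordinal.limitRecOn_limit _ _ _ _ h

lemma subset_relStep (R : Set (X × X)) : R ⊆ relStep R := by
  intro p hp
  unfold relStep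
  split
  · exact Relation.EqvGen.rel p.1 p.2 hp
  · exact subset_closure hp

lemma relHier_mono : ∀ {β α : Ordinal}, α ≤ β → relHier R0 α ⊆ relHier R0 β := by
  intro β
  induction β using Ordinal.induction with
  | h β IH =>
    intro α hα
    rcases eq_or_lt_of_le hα with rfl | hlt
    · exact Set.Subset.rfl
    rcases Ordinal.zero_or_succ_or_isSuccLimit β with rfl | ⟨γ, rfl⟩ | hlim
    · exact absurd hlt (not_lt_zero (a := α))
    · refine ((IH γ (Order.lt_succ γ) (Order.lt_succ_iff.mp hlt)).trans
        (subset_relStep _)).trans ?_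
      rw [relHier_succ]
    · rw [relHier_limit _ hlim]
      exact Set.subset_iUnion_of_subset ⟨α, hlt⟩ Set.Subset.rfl

/-- Every closed equivalence relation containing `R0` contains the whole hierarchy. -/
lemma relHier_subset {R : Set (X × X)} (hR0 : R0 ⊆ R) (hcl : IsClosed R)
    (hrefl : ∀ a : X, (a, a) ∈ R) (hsymm : ∀ a b : X, (a, b) ∈ R → (b, a) ∈ R)
    (htrans : ∀ a b c : X, (a, b) ∈ R → (b, c) ∈ R → (a, c) ∈ R) :
    ∀ β : Ordinal, relHier R0 β ⊆ R := by
  intro β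
  induction β using Ordinal.induction with
  | h β IH =>
    rcases Ordinal.zero_or_succ_or_isSuccLimit β with rfl | ⟨γ, rfl⟩ | hlim
    · rw [relHier_zero]; exact hR0
    · have hγ : relHier R0 γ ⊆ R := IH γ (Order.lt_succ γ)
      rw [relHier_succ]
      unfold relStep
      split
      · rintro ⟨x, y⟩ hp
        have key : ∀ a b : X,
            Relation.EqvGen (fun a b => (a, b) ∈ relHier R0 γ) a b → (a, b) ∈ R := by
          intro a b h
          induction h with
          | rel a b h => exact hγ h
          | refl a => exact hrefl a
          | symm a b _ ih => exact hsymm a b ih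
          | trans a b c _ _ ih1 ih2 => exact htrans a b c ih1 ih2
        exact key x y hp
      · exact closure_minimal hγ hcl
    · rw [relHier_limit _ hlim]
      exact Set.iUnion_subset fun β' => IH β'.1 β'.2

lemma closure_relHier_subset (β : Ordinal) :
    closure (relHier R0 β) ⊆ relHier R0 (Order.succ (Order.succ β)) := by
  by_cases hcl : IsClosed (relHier R0 β)
  · rw [hcl.closure_eq]
    exact relHier_mono R0 ((Order.le_succ β).trans (Order.le_succ _))
  · have : relHier R0 (Order.succ β) = closure (relHier R0 β) := by
      rw [relHier_succ]; unfold relStep; rw [if_neg hcl]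
    rw [← this]
    exact relHier_mono R0 (Order.le_succ _)

lemma ordinal_add_three (a : Ordinal) :
    a + 3 = Order.succ (Order.succ (Order.succ a)) := by
  rw [show (3 : Ordinal) = 1 + 1 + 1 by norm_num, ← add_assoc, ← add_assoc,
    Ordinal.add_one_eq_succ, Ordinal.add_one_eq_succ, Ordinal.add_one_eq_succ]

/-- If the hierarchy is stable at `δ`, then `relHier R0 δ` is a closed set. -/
lemma relHier_isClosed_of_stable {δ : Ordinal}
    (h : relHier R0 δ = relHier R0 (Order.succ δ)) : IsClosed (relHier R0 δ) := by
  by_contra hcl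
  have : relHier R0 (Order.succ δ) = closure (relHier R0 δ) := by
    rw [relHier_succ]; unfold relStep; rw [if_neg hcl]
  rw [this] at h
  exact hcl (by rw [← closure_eq_iff_isClosed, ← h])

end AuxHier

theorem cpe_class_iff_topological_cpe {G X : Type*} [Group G] [Countable G]
    [MetricSpace X] [CompactSpace X] [MulAction G X]
    (hcont : ∀ g : G, Continuous fun x : X => g • x)
    (F : ℕ → Finset G) (hF : IsFolner F) :
    ((∃ α : Ordinal, InCPEClass (G := G) (X := X) F α) → TopCPE (G := G) (X := X) F) ∧
      (TopCPE (G := G) (X := X) F →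
        ∃ α : Ordinal, α.card ≤ Cardinal.aleph0 ∧ InCPEClass (G := G) (X := X) F α) := by
  constructor
  · rintro ⟨α, hpos, hu, -⟩ R hcl hrefl hsymm htrans hE
    have h0 : ({p : X × X | IsEntropyPair F p.1 p.2} ∪ {p : X × X | p.1 = p.2}) ⊆ R := by
      refine Set.union_subset hE ?_
      rintro ⟨x, y⟩ (h : x = y)
      subst h
      exact hrefl x
    have := relHier_subset _ h0 hcl hrefl hsymm htrans (α - 1)
    rw [hu] at this
    exact Set.univ_subset_iff.mp this
  · intro hT
    set E0 : Set (X × X) :=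
      {p : X × X | IsEntropyPair F p.1 p.2} ∪ {p : X × X | p.1 = p.2} with hE0
    obtain ⟨b, hbc, -, hb⟩ := TopologicalSpace.exists_countable_basis (X × X)
    set g : Ordinal → Set (Set (X × X)) :=
      fun β => {s ∈ b | (s ∩ relHier E0 β).Nonempty} with hg
    have gmono : ∀ {α β : Ordinal}, α ≤ β → g α ⊆ g β := by
      intro α β hαβ s hs
      exact ⟨hs.1, hs.2.mono (Set.inter_subset_inter_right _ (relHier_mono E0 hαβ))⟩
    have hclo : ∀ {α β : Ordinal}, g α = g β →
        closure (relHier E0 α) = closure (relHier E0 β) := by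
      have key : ∀ {α β : Ordinal}, g α = g β →
          closure (relHier E0 α) ⊆ closure (relHier E0 β) := by
        intro α β hgeq y hy
        rw [mem_closure_iff] at hy ⊢
        intro o ho hyo
        obtain ⟨v, hvb, hyv, hvo⟩ := hb.exists_subset_of_mem_open hyo ho
        have h1 : (v ∩ relHier E0 α).Nonempty := hy v (hb.isOpen hvb) hyv
        have h2 : v ∈ g β := hgeq ▸ (⟨hvb, h1⟩ : v ∈ g α)
        exact h2.2.mono (Set.inter_subset_inter_left _ hvo)
      intro α β hgeq
      exact subset_antisymm (key hgeq) (key hgeq.symm)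
    set W : Ordinal := (Cardinal.aleph 1).ord with hW
    have hWlim : Order.IsSuccLimit W := Cardinal.isSuccLimit_ord Cardinal.aleph0_lt_aleph_one.le
    -- stabilization at a countable ordinal
    have key : ∃ δ : Ordinal, δ < W ∧ relHier E0 δ = relHier E0 (Order.succ δ) := by
      by_contra hno
      push_neg at hno
      have hg3 : ∀ β : Ordinal, β < W → g β ≠ g (β + 3) := by
        intro β hβ heq
        rw [ordinal_add_three] at heq
        have h2W : Order.succ (Order.succ β) < W := hWlim.succ_lt (hWlim.succ_lt hβ)
        refine hno _ h2W (subset_antisymm (relHier_mono E0 (Order.le_succ _)) ?_)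
        calc relHier E0 (Order.succ (Order.succ (Order.succ β)))
            ⊆ closure (relHier E0 (Order.succ (Order.succ (Order.succ β)))) := subset_closure
          _ = closure (relHier E0 β) := (hclo heq).symm
          _ ⊆ relHier E0 (Order.succ (Order.succ β)) := closure_relHier_subset _ _
      have h3W : ∀ β : Ordinal, β < W → 3 * β < W := by
        intro β hβ
        rw [Cardinal.lt_ord, Ordinal.card_mul]
        calc Ordinal.card 3 * β.card ≤ Cardinal.aleph0 * Cardinal.aleph0 := by
              refine mul_le_mul' ?_ ?_
              · simp only [Ordinal.card_ofNat]
                exact (Cardinal.nat_lt_aleph0 3).le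
              · rw [← Order.lt_succ_iff, Cardinal.succ_aleph0]
                exact Cardinal.lt_ord.mp hβ
          _ = Cardinal.aleph0 := Cardinal.aleph0_mul_aleph0
          _ < Cardinal.aleph 1 := Cardinal.aleph0_lt_aleph_one
      have hss : ∀ β : Ordinal, β < W → (g (3 * Order.succ β) \ g (3 * β)).Nonempty := by
        intro β hβ
        rw [Set.diff_nonempty, Ordinal.mul_succ]
        intro hsub
        exact hg3 (3 * β) (h3W β hβ)
          (subset_antisymm (gmono (le_self_add)) hsub)
      let f : Set.Iio W → Set (X × X) := fun β => (hss β.1 β.2).choose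
      have hfmem : ∀ β : Set.Iio W, f β ∈ g (3 * Order.succ β.1) \ g (3 * β.1) :=
        fun β => (hss β.1 β.2).choose_spec
      have haux : ∀ β γ : Set.Iio W, β.1 < γ.1 → f β ≠ f γ := by
        intro β γ hlt heq
        have h1 : f β ∈ g (3 * γ.1) :=
          gmono (mul_le_mul_right (Order.succ_le_of_lt hlt) 3) (hfmem β).1
        rw [heq] at h1
        exact (hfmem γ).2 h1
      have hfinj : Function.Injective f := by
        intro β γ heq
        rcases lt_trichotomy β.1 γ.1 with h | h | h
        · exact absurd heq (haux β γ h)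
        · exact Subtype.ext h
        · exact absurd heq.symm (haux γ β h)
      -- f maps injectively into the countable set b
      have hfb : ∀ β : Set.Iio W, f β ∈ b := fun β => (hfmem β).1.1
      have : Countable (Set.Iio W) := by
        have : Countable b := hbc.to_subtype
        exact Function.Injective.countable
          (f := fun β : Set.Iio W => (⟨f β, hfb β⟩ : b))
          (fun β γ h => hfinj (congrArg Subtype.val h))
      have hcnt : (Set.Iio W).Countable := Set.countable_coe_iff.mpr this
      rw [Cardinal.countable_iff_lt_aleph_one, Ordinal.mk_Iio_ordinal, hW,
        Cardinal.card_ord] at hcnt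
      exact absurd hcnt (by simp)
    obtain ⟨δ, hδW, hstab⟩ := key
    -- `relHier E0 δ` is a closed invariant equivalence relation containing the entropy pairs
    have hcl : IsClosed (relHier E0 δ) := relHier_isClosed_of_stable E0 hstab
    have heqv : {p : X × X | Relation.EqvGen (fun a b => (a, b) ∈ relHier E0 δ) p.1 p.2} =
        relHier E0 δ := by
      have := hstab.symm
      rwa [relHier_succ, relStep, if_pos hcl] at this
    have hrefl : ∀ a : X, (a, a) ∈ relHier E0 δ := by
      intro a
      rw [← heqv]
      exact Relation.EqvGen.refl a
    have hsymm : ∀ a b : X, (a, b) ∈ relHier E0 δ → (b, a) ∈ relHier E0 δ := by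
      intro a b h
      rw [← heqv] at h ⊢
      exact Relation.EqvGen.symm _ _ h
    have htrans : ∀ a b c : X,
        (a, b) ∈ relHier E0 δ → (b, c) ∈ relHier E0 δ → (a, c) ∈ relHier E0 δ := by
      intro a b c h1 h2
      rw [← heqv] at h1 h2 ⊢
      exact Relation.EqvGen.trans _ _ _ h1 h2
    have hEsub : {p : X × X | IsEntropyPair F p.1 p.2} ⊆ relHier E0 δ := by
      refine Set.Subset.trans ?_ (relHier_mono E0 (zero_le (a := δ)))
      rw [relHier_zero]
      exact Set.subset_union_left
    have huniv : relHier E0 δ = Set.univ := hT _ hcl hrefl hsymm htrans hEsub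
    -- take the least class index
    set S : Set Ordinal := {γ | 0 < γ ∧ relHier E0 (γ - 1) = Set.univ} with hS
    have hmemS : (1 : Ordinal) + δ ∈ S := by
      constructor
      · exact lt_of_lt_of_le zero_lt_one (le_self_add)
      · rw [Ordinal.add_sub_cancel]
        exact huniv
    have hSne : S.Nonempty := ⟨_, hmemS⟩
    refine ⟨sInf S, ?_, ?_⟩
    · have h1 : sInf S ≤ 1 + δ := csInf_le' hmemS
      have h2 : (sInf S).card ≤ ((1 : Ordinal) + δ).card := Ordinal.card_le_card h1
      refine h2.trans ?_
      rw [Ordinal.card_add, Cardinal.add_le_aleph0]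
      constructor
      · simp
      · rw [← Order.lt_succ_iff, Cardinal.succ_aleph0]
        exact Cardinal.lt_ord.mp hδW
    · obtain ⟨hpos, hu⟩ := csInf_mem hSne
      refine ⟨hpos, hu, ?_⟩
      intro β hβpos hβlt heq
      have hβS : β ∈ S := ⟨hβpos, heq⟩
      exact absurd hβlt (not_lt.mpr (csInf_le' (s := S) hβS))
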